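/- In the Pure Greedy Algorithm for the Poisson equation, where g_n = g_{n−1} − r_n ⊗ s_n and each (r_n, s_n) satisfies the Euler-Lagrange equations, the Pythagorean identity ‖g_{n−1}‖² = ‖g_n‖² + ‖r_n ⊗ s_n‖² holds for every n. Consequently the sequence ‖g_n‖ is nonincreasing and Σ_n ‖r_n ⊗ s_n‖² ≤ ‖g‖² < ∞. -/

import Mathlib

open MeasureTheory Filter

noncomputable section

/-- Smooth compactly supported test functions on an open set `Ω ⊆ ℝ`. -/
def IsTest1 (Ω : Set ℝ) (φ : ℝ → ℝ) : Prop :=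
  ContDiff ℝ (⊤ : ℕ∞) φ ∧ HasCompactSupport φ ∧ tsupport φ ⊆ Ω

/-- Smooth compactly supported test functions on an open set `Ω ⊆ ℝ × ℝ`. -/
def IsTest2 (Ω : Set (ℝ × ℝ)) (φ : ℝ × ℝ → ℝ) : Prop :=
  ContDiff ℝ (⊤ : ℕ∞) φ ∧ HasCompactSupport φ ∧ tsupport φ ⊆ Ω

/-- `u'` is a weak derivative of `u` on `Ω ⊆ ℝ`. -/
def HasWeakDeriv (Ω : Set ℝ) (u u' : ℝ → ℝ) : Prop :=
  ∀ φ : ℝ → ℝ, IsTest1 Ω φ →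
    (∫ x in Ω, u x * deriv φ x) = - ∫ x in Ω, u' x * φ x

/-- `du` is a weak gradient of `u` on `Ω ⊆ ℝ × ℝ`. -/
def HasWeakGrad (Ω : Set (ℝ × ℝ)) (u : ℝ × ℝ → ℝ) (du : ℝ × ℝ → ℝ × ℝ) : Prop :=
  ∀ φ : ℝ × ℝ → ℝ, IsTest2 Ω φ →
    ((∫ z in Ω, u z * fderiv ℝ φ z (1, 0)) = - ∫ z in Ω, (du z).1 * φ z) ∧
    ((∫ z in Ω, u z * fderiv ℝ φ z (0, 1)) = - ∫ z in Ω, (du z).2 * φ z)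

/-- Membership in `H¹₀(Ω)` for `Ω ⊆ ℝ`, with weak derivative `u'` :
`u, u' ∈ L²`, `u'` is the weak derivative of `u`, and `u` is approximated in the
`H¹` norm by smooth compactly supported functions. -/
structure MemH10₁ (Ω : Set ℝ) (u u' : ℝ → ℝ) : Prop where
  memL2 : MemLp u 2 (volume.restrict Ω)
  memL2' : MemLp u' 2 (volume.restrict Ω)
  weak : HasWeakDeriv Ω u u'
  approx : ∀ ε : ℝ, 0 < ε → ∃ φ : ℝ → ℝ, IsTest1 Ω φ ∧
    eLpNorm (fun x => u x - φ x) 2 (volume.restrict Ω) < ENNReal.ofReal ε ∧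
    eLpNorm (fun x => u' x - deriv φ x) 2 (volume.restrict Ω) < ENNReal.ofReal ε

/-- Membership in `H¹₀(Ω)` for `Ω ⊆ ℝ × ℝ`, with weak gradient `du`. -/
structure MemH10₂ (Ω : Set (ℝ × ℝ)) (u : ℝ × ℝ → ℝ) (du : ℝ × ℝ → ℝ × ℝ) : Prop where
  memL2 : MemLp u 2 (volume.restrict Ω)
  memL2' : MemLp du 2 (volume.restrict Ω)
  weak : HasWeakGrad Ω u du
  approx : ∀ ε : ℝ, 0 < ε → ∃ φ : ℝ × ℝ → ℝ, IsTest2 Ω φ ∧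
    eLpNorm (fun z => u z - φ z) 2 (volume.restrict Ω) < ENNReal.ofReal ε ∧
    eLpNorm (fun z => du z - (fderiv ℝ φ z (1, 0), fderiv ℝ φ z (0, 1))) 2
      (volume.restrict Ω) < ENNReal.ofReal ε

/-- Tensor product `(r ⊗ s)(x,y) = r(x) s(y)`. -/
def tensor (r s : ℝ → ℝ) : ℝ × ℝ → ℝ := fun z => r z.1 * s z.2

/-- The gradient of the tensor product `r ⊗ s`, given the derivatives `r'`, `s'`. -/
def gradTensor (r r' s s' : ℝ → ℝ) : ℝ × ℝ → ℝ × ℝ :=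
  fun z => (r' z.1 * s z.2, r z.1 * s' z.2)

/-- The `H¹₀(Ω)` inner product `⟨u,v⟩ = ∫_Ω ∇u·∇v`, expressed on gradients. -/
def inner2 (Ω : Set (ℝ × ℝ)) (u v : ℝ × ℝ → ℝ × ℝ) : ℝ :=
  ∫ z in Ω, ((u z).1 * (v z).1 + (u z).2 * (v z).2)



section Aux

open MeasureTheory

lemma mul_int {α : Type*} [MeasurableSpace α] {μ : Measure α} {f g : α → ℝ}
    (hf : MemLp f 2 μ) (hg : MemLp g 2 μ) : Integrable (fun x => f x * g x) μ := by
  refine Integrable.mono (hf.integrable_sq.add hg.integrable_sq)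
    (hf.aestronglyMeasurable.mul hg.aestronglyMeasurable) (ae_of_all _ fun x => ?_)
  simp only [Real.norm_eq_abs, Pi.add_apply]
  have h1 := sq_nonneg (|f x| - |g x|)
  rw [abs_mul, abs_of_nonneg (by positivity : (0:ℝ) ≤ f x ^ 2 + g x ^ 2)]
  nlinarith [abs_nonneg (f x), abs_nonneg (g x), sq_abs (f x), sq_abs (g x)]

lemma tensor_memL2 {f g : ℝ → ℝ} {s t : Set ℝ}
    (hf : MemLp f 2 (volume.restrict s)) (hg : MemLp g 2 (volume.restrict t)) :
    MemLp (fun z : ℝ × ℝ => f z.1 * g z.2) 2 (volume.restrict (s ×ˢ t)) := by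
  have h : (volume : Measure (ℝ × ℝ)).restrict (s ×ˢ t)
      = (volume.restrict s).prod (volume.restrict t) := by
    rw [Measure.prod_restrict, ← Measure.volume_eq_prod]
  rw [h]
  have hm : AEStronglyMeasurable (fun z : ℝ × ℝ => f z.1 * g z.2)
      ((volume.restrict s).prod (volume.restrict t)) :=
    hf.aestronglyMeasurable.comp_fst.mul hg.aestronglyMeasurable.comp_snd
  rw [memLp_two_iff_integrable_sq hm]
  have := hf.integrable_sq.mul_prod hg.integrable_sq
  simpa [mul_pow] using this

lemma memL2_fst {α : Type*} [MeasurableSpace α] {μ : Measure α} {u : α → ℝ × ℝ}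
    (h : MemLp u 2 μ) : MemLp (fun x => (u x).1) 2 μ :=
  h.of_le (continuous_fst.comp_aestronglyMeasurable h.aestronglyMeasurable)
    (ae_of_all _ fun x => norm_fst_le (u x))

lemma memL2_snd {α : Type*} [MeasurableSpace α] {μ : Measure α} {u : α → ℝ × ℝ}
    (h : MemLp u 2 μ) : MemLp (fun x => (u x).2) 2 μ :=
  h.of_le (continuous_snd.comp_aestronglyMeasurable h.aestronglyMeasurable)
    (ae_of_all _ fun x => norm_snd_le (u x))

lemma zero_MemH10 {c d : ℝ} : MemH10₁ (Set.Ioo c d) (fun _ => 0) (fun _ => 0) := by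
  constructor
  · exact memLp_const (0:ℝ)
  · exact memLp_const (0:ℝ)
  · intro φ hφ; simp
  · intro ε hε
    refine ⟨fun _ => 0, ⟨contDiff_const, ?_, ?_⟩, ?_, ?_⟩
    · simpa [HasCompactSupport, tsupport, Function.support] using isCompact_empty
    · simp [tsupport, Function.support]
    · simpa using ENNReal.ofReal_pos.mpr hε
    · simpa [deriv_const'] using ENNReal.ofReal_pos.mpr hε

lemma inner2_expand {Ω : Set (ℝ × ℝ)} {A T : ℝ × ℝ → ℝ × ℝ}
    (hA1 : MemLp (fun z => (A z).1) 2 (volume.restrict Ω))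
    (hA2 : MemLp (fun z => (A z).2) 2 (volume.restrict Ω))
    (hT1 : MemLp (fun z => (T z).1) 2 (volume.restrict Ω))
    (hT2 : MemLp (fun z => (T z).2) 2 (volume.restrict Ω)) :
    inner2 Ω (fun z => A z + T z) (fun z => A z + T z)
      = inner2 Ω A A + 2 * inner2 Ω A T + inner2 Ω T T := by
  have iAA : Integrable (fun z => (A z).1 * (A z).1 + (A z).2 * (A z).2)
      (volume.restrict Ω) := (mul_int hA1 hA1).add (mul_int hA2 hA2)
  have iAT : Integrable (fun z => (A z).1 * (T z).1 + (A z).2 * (T z).2)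
      (volume.restrict Ω) := (mul_int hA1 hT1).add (mul_int hA2 hT2)
  have iTT : Integrable (fun z => (T z).1 * (T z).1 + (T z).2 * (T z).2)
      (volume.restrict Ω) := (mul_int hT1 hT1).add (mul_int hT2 hT2)
  have hfun : (fun z => ((A z + T z).1 * (A z + T z).1 + (A z + T z).2 * (A z + T z).2))
      = fun z => ((A z).1 * (A z).1 + (A z).2 * (A z).2)
        + ((2 : ℝ) * ((A z).1 * (T z).1 + (A z).2 * (T z).2)
          + ((T z).1 * (T z).1 + (T z).2 * (T z).2)) := by
    funext z; simp only [Prod.fst_add, Prod.snd_add]; ring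
  simp only [inner2]
  have h2 : Integrable (fun z => (2 : ℝ) * ((A z).1 * (T z).1 + (A z).2 * (T z).2)
      + ((T z).1 * (T z).1 + (T z).2 * (T z).2)) (volume.restrict Ω) :=
    (iAT.const_mul 2).add iTT
  have h3 : Integrable (fun z => (2 : ℝ) * ((A z).1 * (T z).1 + (A z).2 * (T z).2))
      (volume.restrict Ω) := iAT.const_mul 2
  rw [hfun, integral_add iAA h2, integral_add h3 iTT, MeasureTheory.integral_const_mul]
  ring

end Aux

/-- For the Pure Greedy Algorithm with residuals
`g_n = g - Σ_{k ≤ n} r_k ⊗ s_k`, if each `(r_n, s_n)` satisfies the Euler–Lagrange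
equations `⟨g_n, r ⊗ s_n + r_n ⊗ s⟩ = 0`, then the Pythagorean identity
`‖g_{n-1}‖² = ‖g_n‖² + ‖r_n ⊗ s_n‖²` holds; consequently `‖g_n‖` is nonincreasing
and `Σ_n ‖r_n ⊗ s_n‖² ≤ ‖g‖² < ∞`. Here `‖u‖² = ∫_Ω |∇u|²` and the residual
gradients are `Gr n = ∇g - Σ_{k < n} ∇(r_k ⊗ s_k)`. -/
theorem stmt8 (a b c d : ℝ) (hab : a < b) (hcd : c < d)
    (Ω : Set (ℝ × ℝ)) (hΩ : Ω = Set.Ioo a b ×ˢ Set.Ioo c d)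
    (g : ℝ × ℝ → ℝ) (dg : ℝ × ℝ → ℝ × ℝ) (hg : MemH10₂ Ω g dg)
    (r r' s s' : ℕ → ℝ → ℝ)
    (hr : ∀ n, MemH10₁ (Set.Ioo a b) (r n) (r' n))
    (hs : ∀ n, MemH10₁ (Set.Ioo c d) (s n) (s' n))
    (Gr : ℕ → ℝ × ℝ → ℝ × ℝ)
    (hGr : ∀ n, Gr n = fun z =>
      dg z - ∑ k ∈ Finset.range n, gradTensor (r k) (r' k) (s k) (s' k) z)
    (hEL : ∀ n, ∀ ρ ρ' σ σ' : ℝ → ℝ,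
      MemH10₁ (Set.Ioo a b) ρ ρ' → MemH10₁ (Set.Ioo c d) σ σ' →
      inner2 Ω (Gr (n + 1))
        (fun z => gradTensor ρ ρ' (s n) (s' n) z +
          gradTensor (r n) (r' n) σ σ' z) = 0) :
    (∀ n, inner2 Ω (Gr n) (Gr n) =
        inner2 Ω (Gr (n + 1)) (Gr (n + 1)) +
          inner2 Ω (gradTensor (r n) (r' n) (s n) (s' n))
            (gradTensor (r n) (r' n) (s n) (s' n))) ∧
    (Antitone fun n => Real.sqrt (inner2 Ω (Gr n) (Gr n))) ∧
    (Summable fun n => inner2 Ω (gradTensor (r n) (r' n) (s n) (s' n))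
        (gradTensor (r n) (r' n) (s n) (s' n))) ∧
    (∑' n, inner2 Ω (gradTensor (r n) (r' n) (s n) (s' n))
        (gradTensor (r n) (r' n) (s n) (s' n))) ≤ inner2 Ω dg dg := by
  have hTL2 : ∀ n, MemLp (fun z => (gradTensor (r n) (r' n) (s n) (s' n) z).1) 2
        (volume.restrict Ω) ∧ MemLp (fun z => (gradTensor (r n) (r' n) (s n) (s' n) z).2) 2
        (volume.restrict Ω) := by
    intro n
    constructor
    · simpa [hΩ, gradTensor] using tensor_memL2 (hr n).memL2' (hs n).memL2
    · simpa [hΩ, gradTensor] using tensor_memL2 (hr n).memL2 (hs n).memL2'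
  have hGrL : ∀ n, MemLp (fun z => (Gr n z).1) 2 (volume.restrict Ω) ∧
      MemLp (fun z => (Gr n z).2) 2 (volume.restrict Ω) := by
    intro n
    rw [hGr n]
    constructor
    · have : (fun z => ((dg z - ∑ k ∈ Finset.range n,
          gradTensor (r k) (r' k) (s k) (s' k) z)).1)
          = fun z => (dg z).1 - ∑ k ∈ Finset.range n,
            (gradTensor (r k) (r' k) (s k) (s' k) z).1 := by
        funext z; simp [Prod.fst_sum]
      rw [this]
      exact (memL2_fst hg.memL2').sub
        (memLp_finset_sum _ fun k _ => (hTL2 k).1)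
    · have : (fun z => ((dg z - ∑ k ∈ Finset.range n,
          gradTensor (r k) (r' k) (s k) (s' k) z)).2)
          = fun z => (dg z).2 - ∑ k ∈ Finset.range n,
            (gradTensor (r k) (r' k) (s k) (s' k) z).2 := by
        funext z; simp [Prod.snd_sum]
      rw [this]
      exact (memL2_snd hg.memL2').sub
        (memLp_finset_sum _ fun k _ => (hTL2 k).2)
  have horth : ∀ n, inner2 Ω (Gr (n + 1))
      (gradTensor (r n) (r' n) (s n) (s' n)) = 0 := by
    intro n
    have h := hEL n (r n) (r' n) (fun _ => 0) (fun _ => 0) (hr n) zero_MemH10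
    have heq : (fun z => gradTensor (r n) (r' n) (s n) (s' n) z +
        gradTensor (r n) (r' n) (fun _ => 0) (fun _ => 0) z)
        = gradTensor (r n) (r' n) (s n) (s' n) := by
      funext z; simp [gradTensor]
    rwa [heq] at h
  have hsplit : ∀ n, Gr n = fun z => Gr (n + 1) z +
      gradTensor (r n) (r' n) (s n) (s' n) z := by
    intro n
    rw [hGr n, hGr (n + 1)]
    funext z
    simp [Finset.sum_range_succ]
    abel
  have hpyth : ∀ n, inner2 Ω (Gr n) (Gr n) =
      inner2 Ω (Gr (n + 1)) (Gr (n + 1)) +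
        inner2 Ω (gradTensor (r n) (r' n) (s n) (s' n))
          (gradTensor (r n) (r' n) (s n) (s' n)) := by
    intro n
    rw [hsplit n, inner2_expand (hGrL (n+1)).1 (hGrL (n+1)).2 (hTL2 n).1 (hTL2 n).2,
      horth n]
    ring
  have hnonneg : ∀ u : ℝ × ℝ → ℝ × ℝ, 0 ≤ inner2 Ω u u := by
    intro u
    exact integral_nonneg fun z => add_nonneg (mul_self_nonneg _) (mul_self_nonneg _)
  have hq : ∀ n, 0 ≤ inner2 Ω (gradTensor (r n) (r' n) (s n) (s' n))
      (gradTensor (r n) (r' n) (s n) (s' n)) := fun n => hnonneg _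
  have hG0 : inner2 Ω (Gr 0) (Gr 0) = inner2 Ω dg dg := by
    have : Gr 0 = dg := by rw [hGr 0]; funext z; simp
    rw [this]
  have hpartial : ∀ n, (∑ k ∈ Finset.range n,
      inner2 Ω (gradTensor (r k) (r' k) (s k) (s' k))
        (gradTensor (r k) (r' k) (s k) (s' k)))
      = inner2 Ω dg dg - inner2 Ω (Gr n) (Gr n) := by
    intro n
    induction n with
    | zero => simp [hG0]
    | succ m ih => rw [Finset.sum_range_succ, ih, hpyth m]; ring
  have hbound : ∀ n, (∑ k ∈ Finset.range n,
      inner2 Ω (gradTensor (r k) (r' k) (s k) (s' k))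
        (gradTensor (r k) (r' k) (s k) (s' k))) ≤ inner2 Ω dg dg := by
    intro n
    rw [hpartial n]
    linarith [hnonneg (Gr n)]
  refine ⟨hpyth, ?_, ?_, ?_⟩
  · refine antitone_nat_of_succ_le fun n => ?_
    exact Real.sqrt_le_sqrt (by linarith [hpyth n, hq n])
  · exact summable_of_sum_range_le hq hbound
  · exact Real.tsum_le_of_sum_range_le hq hbound


end
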